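/- arXiv:2406.14914 — 3 statements merged into one kernel-verified Lean document; each statement's English description precedes it below -/
import Mathlib

section
/- Let C1, C2 : E → (0,∞) be two weight configurations on a simple, undirected, locally finite, connected graph G = (V,E), with resistances R_i = 1/C_i. If Σ_{e∈E} |R_1(e) − R_2(e)| < ∞, then for each n, the effective resistances R_{1,n}, R_{2,n} between a fixed origin a and the identified boundary ∂V_(n) (in the induced finite subgraph) satisfy |R_{1,n} − R_{2,n}| ≤ Σ_{e∈E} |R_1(e) − R_2(e)|. -/
open Filter

noncomputable section

variable {V : Type*}

/-- A unit flow from the origin `a` to the identified boundary `∂V_(n)` in the finite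
network induced by the ball of radius `n` (edges of `G_(n)` with an endpoint at
distance `< n` from `a`), with all edge flows bounded by `1` in absolute value
(the class `𝒥(a → b_n)` of the paper). -/
def IsUnitFlow (G : SimpleGraph V) (a : V) (n : ℕ) (j : V → V → ℝ) : Prop :=
  (∀ x y, j x y = -j y x) ∧
  (∀ x y, ¬G.Adj x y → j x y = 0) ∧
  (∀ x y, j x y ≠ 0 → G.dist a x < n ∨ G.dist a y < n) ∧
  (∀ x, x ≠ a → G.dist a x < n → ∑' y, j x y = 0) ∧
  (∑' y, j a y = 1) ∧
  (∀ x y, |j x y| ≤ 1)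

/-- The effective resistance between `a` and the identified boundary `∂V_(n)`,
as the infimum of flow energies (Thompson's principle); each edge `{x,y}` is
counted once, whence the factor `1/2` for the sum over ordered pairs. -/
def effRes (G : SimpleGraph V) (a : V) (R : V → V → ℝ) (n : ℕ) : ℝ :=
  sInf {x | ∃ j, IsUnitFlow G a n j ∧
    x = (1 / 2) * ∑' p : V × V, (j p.1 p.2) ^ 2 * R p.1 p.2}

lemma tsum_energy_le [Countable V] (G : SimpleGraph V) [DecidableRel G.Adj]
    (j R1 R2 : V → V → ℝ)
    (hj0 : ∀ x y, ¬G.Adj x y → j x y = 0) (hb : ∀ x y, |j x y| ≤ 1)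
    (hd : Summable fun p : V × V =>
      if G.Adj p.1 p.2 then |R1 p.1 p.2 - R2 p.1 p.2| else 0) :
    (∑' p : V × V, (j p.1 p.2) ^ 2 * R1 p.1 p.2)
      ≤ (∑' p : V × V, (j p.1 p.2) ^ 2 * R2 p.1 p.2)
        + ∑' p : V × V, (if G.Adj p.1 p.2 then |R1 p.1 p.2 - R2 p.1 p.2| else 0) := by
  set f : V × V → ℝ := fun p => (j p.1 p.2) ^ 2 * R1 p.1 p.2 with hf_def
  set g : V × V → ℝ := fun p => (j p.1 p.2) ^ 2 * R2 p.1 p.2 with hg_def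
  set D : V × V → ℝ := fun p =>
    if G.Adj p.1 p.2 then |R1 p.1 p.2 - R2 p.1 p.2| else 0 with hD_def
  have hDnonneg : ∀ p, 0 ≤ D p := by
    intro p
    simp only [hD_def]
    split <;> [exact abs_nonneg _; exact le_rfl]
  have hfg : ∀ p, |f p - g p| ≤ D p := by
    rintro ⟨x, y⟩
    simp only [hf_def, hg_def, hD_def]
    by_cases h : G.Adj x y
    · simp only [if_pos h]
      rw [← mul_sub, abs_mul, abs_of_nonneg (sq_nonneg _)]
      have hj2 : (j x y) ^ 2 ≤ 1 := by
        have h1 := hb x y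
        nlinarith [abs_nonneg (j x y), sq_abs (j x y)]
      nlinarith [abs_nonneg (R1 x y - R2 x y)]
    · simp [if_neg h, hj0 x y h]
  have habs : Summable fun p => |f p - g p| :=
    Summable.of_nonneg_of_le (fun p => abs_nonneg _) hfg hd
  have hsub : Summable fun p => f p - g p := habs.of_abs
  by_cases hg : Summable g
  · have hf : Summable f := by
      have := hg.add hsub
      simpa using this
    have h1 : (∑' p, (f p - g p)) ≤ ∑' p, D p :=
      Summable.tsum_le_tsum (fun p => (abs_le.mp (hfg p)).2) hsub hd
    rw [Summable.tsum_sub hf hg] at h1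
    linarith
  · have hf : ¬Summable f := fun hf => hg (by have := hf.sub hsub; simpa using this)
    rw [tsum_eq_zero_of_not_summable hf, tsum_eq_zero_of_not_summable hg]
    simpa using tsum_nonneg hDnonneg

lemma effRes_le_aux [Countable V] (G : SimpleGraph V) [DecidableRel G.Adj] (a : V) (n : ℕ)
    (R1 R2 : V → V → ℝ)
    (hR1 : ∀ x y, G.Adj x y → 0 ≤ R1 x y) (hR2 : ∀ x y, G.Adj x y → 0 ≤ R2 x y)
    (hd : Summable fun p : V × V =>
      if G.Adj p.1 p.2 then |R1 p.1 p.2 - R2 p.1 p.2| else 0) :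
    effRes G a R1 n ≤ effRes G a R2 n
      + (1 / 2) * ∑' p : V × V,
          (if G.Adj p.1 p.2 then |R1 p.1 p.2 - R2 p.1 p.2| else 0) := by
  set D : V × V → ℝ := fun p =>
    if G.Adj p.1 p.2 then |R1 p.1 p.2 - R2 p.1 p.2| else 0 with hD_def
  have hDnonneg : ∀ p, 0 ≤ D p := by
    intro p
    simp only [hD_def]
    split <;> [exact abs_nonneg _; exact le_rfl]
  have hK : 0 ≤ (1 / 2) * ∑' p, D p :=
    mul_nonneg (by norm_num) (tsum_nonneg hDnonneg)
  have energy_nonneg : ∀ (R : V → V → ℝ), (∀ x y, G.Adj x y → 0 ≤ R x y) →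
      ∀ j : V → V → ℝ, (∀ x y, ¬G.Adj x y → j x y = 0) →
      0 ≤ (1 / 2) * ∑' p : V × V, (j p.1 p.2) ^ 2 * R p.1 p.2 := by
    intro R hR j hj0
    refine mul_nonneg (by norm_num) (tsum_nonneg ?_)
    rintro ⟨x, y⟩
    by_cases h : G.Adj x y
    · exact mul_nonneg (sq_nonneg _) (hR x y h)
    · simp [hj0 x y h]
  by_cases hne : ∃ j, IsUnitFlow G a n j
  · unfold effRes
    obtain ⟨j0, hj0⟩ := hne
    have hbdd1 : BddBelow {x | ∃ j, IsUnitFlow G a n j ∧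
        x = (1 / 2) * ∑' p : V × V, (j p.1 p.2) ^ 2 * R1 p.1 p.2} := by
      refine ⟨0, ?_⟩
      rintro x ⟨j, hj, rfl⟩
      exact energy_nonneg R1 hR1 j hj.2.1
    rw [← sub_le_iff_le_add]
    refine le_csInf ⟨_, j0, hj0, rfl⟩ ?_
    rintro b ⟨j, hj, rfl⟩
    rw [sub_le_iff_le_add]
    have hstep := tsum_energy_le G j R1 R2 hj.2.1 hj.2.2.2.2.2 hd
    calc sInf {x | ∃ j, IsUnitFlow G a n j ∧
          x = (1 / 2) * ∑' p : V × V, (j p.1 p.2) ^ 2 * R1 p.1 p.2}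
        ≤ (1 / 2) * ∑' p : V × V, (j p.1 p.2) ^ 2 * R1 p.1 p.2 :=
          csInf_le hbdd1 ⟨j, hj, rfl⟩
      _ ≤ (1 / 2) * ∑' p : V × V, (j p.1 p.2) ^ 2 * R2 p.1 p.2
            + (1 / 2) * ∑' p, D p := by
          simp only [hD_def] at *
          linarith
  · unfold effRes
    have e1 : {x | ∃ j, IsUnitFlow G a n j ∧
        x = (1 / 2) * ∑' p : V × V, (j p.1 p.2) ^ 2 * R1 p.1 p.2} = ∅ := by
      ext x; simp only [Set.mem_setOf_eq, Set.mem_empty_iff_false, iff_false]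
      rintro ⟨j, hj, -⟩; exact hne ⟨j, hj⟩
    have e2 : {x | ∃ j, IsUnitFlow G a n j ∧
        x = (1 / 2) * ∑' p : V × V, (j p.1 p.2) ^ 2 * R2 p.1 p.2} = ∅ := by
      ext x; simp only [Set.mem_setOf_eq, Set.mem_empty_iff_false, iff_false]
      rintro ⟨j, hj, -⟩; exact hne ⟨j, hj⟩
    rw [e1, e2, Real.sInf_empty]
    simpa using hK

/-- if the resistances `R_i = 1/C_i` of two weight configurations on a
simple, undirected, locally finite, connected graph satisfy
`∑_{e∈E} |R_1(e) - R_2(e)| < ∞`, then for each `n` the effective resistances between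
`a` and the identified boundary `∂V_(n)` satisfy
`|R_{1,n} - R_{2,n}| ≤ ∑_{e∈E} |R_1(e) - R_2(e)|`. -/
theorem stmt0 [Countable V] (G : SimpleGraph V) [DecidableRel G.Adj] (hconn : G.Connected)
    (hlf : G.LocallyFinite) (a : V) (C1 C2 : V → V → ℝ)
    (hsym1 : ∀ x y, C1 x y = C1 y x) (hsym2 : ∀ x y, C2 x y = C2 y x)
    (hpos1 : ∀ x y, G.Adj x y → 0 < C1 x y)
    (hpos2 : ∀ x y, G.Adj x y → 0 < C2 x y)
    (hsum : Summable fun p : V × V =>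
      if G.Adj p.1 p.2 then |1 / C1 p.1 p.2 - 1 / C2 p.1 p.2| else 0) :
    ∀ n : ℕ,
      |effRes G a (fun x y => 1 / C1 x y) n - effRes G a (fun x y => 1 / C2 x y) n|
        ≤ (1 / 2) * ∑' p : V × V,
            (if G.Adj p.1 p.2 then |1 / C1 p.1 p.2 - 1 / C2 p.1 p.2| else 0) := by
  intro n
  have hR1 : ∀ x y, G.Adj x y → (0:ℝ) ≤ 1 / C1 x y := fun x y h =>
    le_of_lt (div_pos one_pos (hpos1 x y h))
  have hR2 : ∀ x y, G.Adj x y → (0:ℝ) ≤ 1 / C2 x y := fun x y h =>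
    le_of_lt (div_pos one_pos (hpos2 x y h))
  have hsum' : Summable fun p : V × V =>
      if G.Adj p.1 p.2 then |1 / C2 p.1 p.2 - 1 / C1 p.1 p.2| else 0 := by
    simpa only [abs_sub_comm] using hsum
  have h1 := effRes_le_aux G a n (fun x y => 1 / C1 x y) (fun x y => 1 / C2 x y)
    hR1 hR2 hsum
  have h2 := effRes_le_aux G a n (fun x y => 1 / C2 x y) (fun x y => 1 / C1 x y)
    hR2 hR1 hsum'
  have heq : (∑' p : V × V, (if G.Adj p.1 p.2 then |1 / C2 p.1 p.2 - 1 / C1 p.1 p.2| else 0))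
      = ∑' p : V × V, (if G.Adj p.1 p.2 then |1 / C1 p.1 p.2 - 1 / C2 p.1 p.2| else 0) := by
    congr 1; funext p; rw [abs_sub_comm]
  rw [heq] at h2
  rw [abs_sub_le_iff]
  constructor <;> linarith

end
end

section
/- Let C1, C2 : E → (0,∞) be weight configurations on a simple, undirected, locally finite, connected graph G with Σ_{e∈E} |1/C_1(e) − 1/C_2(e)| < ∞. Then the weighted random walk on (G, C_1) is recurrent if and only if the weighted random walk on (G, C_2) is recurrent. -/
open Filter

noncomputable section

variable {V : Type*}

/-- The electrical criterion for recurrence of the weighted random walk on `(G, C)`: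
the effective resistance from `a` to infinity is infinite, i.e. `𝓡_n → ∞`. -/
def RecurrentNetwork (G : SimpleGraph V) (a : V) (C : V → V → ℝ) : Prop :=
  Tendsto (fun n => effRes G a (fun x y => 1 / C x y) n) atTop atTop

-- energy comparison
lemma energy_cmp {G : SimpleGraph V} [DecidableRel G.Adj] {C1 C2 : V → V → ℝ}
    (hpos1 : ∀ x y, G.Adj x y → 0 < C1 x y)
    (hsum : Summable fun p : V × V =>
      if G.Adj p.1 p.2 then |1 / C1 p.1 p.2 - 1 / C2 p.1 p.2| else 0)
    {j : V → V → ℝ} (hj0 : ∀ x y, ¬G.Adj x y → j x y = 0)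
    (hj1 : ∀ x y, |j x y| ≤ 1) :
    (∑' p : V × V, (j p.1 p.2) ^ 2 * (1 / C1 p.1 p.2)) ≤
      (∑' p : V × V, (j p.1 p.2) ^ 2 * (1 / C2 p.1 p.2)) +
      ∑' p : V × V, (if G.Adj p.1 p.2 then |1 / C1 p.1 p.2 - 1 / C2 p.1 p.2| else 0) := by
  set f : V × V → ℝ := fun p => (j p.1 p.2) ^ 2 * (1 / C1 p.1 p.2) with hf_def
  set g : V × V → ℝ := fun p => (j p.1 p.2) ^ 2 * (1 / C2 p.1 p.2) with hg_def
  set d : V × V → ℝ := fun p =>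
    if G.Adj p.1 p.2 then |1 / C1 p.1 p.2 - 1 / C2 p.1 p.2| else 0 with hd_def
  have hdnn : ∀ p, 0 ≤ d p := by
    intro p; simp only [hd_def]; split <;> positivity
  have hfg : ∀ p : V × V, |f p - g p| ≤ d p := by
    rintro ⟨x, y⟩
    by_cases h : G.Adj x y
    · simp only [hf_def, hg_def, hd_def, if_pos h]
      rw [← mul_sub, abs_mul, abs_pow, sq_abs]
      have h1 : (j x y) ^ 2 ≤ 1 := by
        have := hj1 x y
        nlinarith [abs_nonneg (j x y), sq_abs (j x y)]
      nlinarith [abs_nonneg (1 / C1 x y - 1 / C2 x y)]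
    · simp [hf_def, hg_def, hd_def, hj0 x y h, h]
  have hsub : Summable (fun p => f p - g p) := by
    rw [← summable_abs_iff]
    exact Summable.of_nonneg_of_le (fun p => abs_nonneg _) hfg hsum
  by_cases hg : Summable g
  · have hf : Summable f := by
      have := hsub.add hg
      simpa using this
    have h1 : (∑' p, (f p - g p)) ≤ ∑' p, d p :=
      Summable.tsum_le_tsum (fun p => (le_abs_self _).trans (hfg p)) hsub hsum
    rw [Summable.tsum_sub hf hg] at h1
    linarith
  · have hf : ¬ Summable f := by
      intro hf
      exact hg (by simpa using hf.sub hsub)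
    rw [tsum_eq_zero_of_not_summable hf, tsum_eq_zero_of_not_summable hg]
    simpa using tsum_nonneg hdnn

lemma effRes_cmp {G : SimpleGraph V} [DecidableRel G.Adj] {C1 C2 : V → V → ℝ}
    (hpos1 : ∀ x y, G.Adj x y → 0 < C1 x y)
    (hpos2 : ∀ x y, G.Adj x y → 0 < C2 x y)
    (hsum : Summable fun p : V × V =>
      if G.Adj p.1 p.2 then |1 / C1 p.1 p.2 - 1 / C2 p.1 p.2| else 0)
    (a : V) (n : ℕ) :
    effRes G a (fun x y => 1 / C1 x y) n ≤ effRes G a (fun x y => 1 / C2 x y) n +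
      (1 / 2) * ∑' p : V × V, (if G.Adj p.1 p.2 then |1 / C1 p.1 p.2 - 1 / C2 p.1 p.2| else 0) := by
  set K : ℝ := (1 / 2) *
    ∑' p : V × V, (if G.Adj p.1 p.2 then |1 / C1 p.1 p.2 - 1 / C2 p.1 p.2| else 0) with hK_def
  have hKnn : 0 ≤ K := by
    rw [hK_def]
    have : 0 ≤ ∑' p : V × V,
        (if G.Adj p.1 p.2 then |1 / C1 p.1 p.2 - 1 / C2 p.1 p.2| else 0) := by
      apply tsum_nonneg; intro p; split <;> positivity
    linarith
  set S1 := {x | ∃ j, IsUnitFlow G a n j ∧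
    x = (1 / 2) * ∑' p : V × V, (j p.1 p.2) ^ 2 * (1 / C1 p.1 p.2)} with hS1
  set S2 := {x | ∃ j, IsUnitFlow G a n j ∧
    x = (1 / 2) * ∑' p : V × V, (j p.1 p.2) ^ 2 * (1 / C2 p.1 p.2)} with hS2
  have hbdd1 : BddBelow S1 := by
    refine ⟨0, ?_⟩
    rintro x ⟨j, hj, rfl⟩
    have : 0 ≤ ∑' p : V × V, (j p.1 p.2) ^ 2 * (1 / C1 p.1 p.2) := by
      apply tsum_nonneg
      rintro ⟨x, y⟩
      by_cases h : G.Adj x y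
      · have := hpos1 x y h; positivity
      · simp [hj.2.1 x y h]
    linarith
  show sInf S1 ≤ sInf S2 + K
  rcases Set.eq_empty_or_nonempty S2 with h2 | h2
  · have h1 : S1 = ∅ := by
      rw [Set.eq_empty_iff_forall_notMem] at h2 ⊢
      rintro x ⟨j, hj, rfl⟩
      exact h2 _ ⟨j, hj, rfl⟩
    rw [h1, h2, Real.sInf_empty]
    linarith
  · have : sInf S1 - K ≤ sInf S2 := by
      apply le_csInf h2
      rintro x ⟨j, hj, rfl⟩
      have hmem : (1 / 2) * (∑' p : V × V, (j p.1 p.2) ^ 2 * (1 / C1 p.1 p.2)) ∈ S1 :=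
        ⟨j, hj, rfl⟩
      have h3 := csInf_le hbdd1 hmem
      have h4 := energy_cmp hpos1 hsum hj.2.1 hj.2.2.2.2.2
      rw [hK_def]
      linarith
    linarith

lemma rec_mono [Countable V] (G : SimpleGraph V) [DecidableRel G.Adj]
    (a : V) (C1 C2 : V → V → ℝ)
    (hpos1 : ∀ x y, G.Adj x y → 0 < C1 x y)
    (hpos2 : ∀ x y, G.Adj x y → 0 < C2 x y)
    (hsum : Summable fun p : V × V =>
      if G.Adj p.1 p.2 then |1 / C1 p.1 p.2 - 1 / C2 p.1 p.2| else 0) :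
    RecurrentNetwork G a C1 → RecurrentNetwork G a C2 := by
  intro h1
  set K : ℝ := (1 / 2) *
    ∑' p : V × V, (if G.Adj p.1 p.2 then |1 / C1 p.1 p.2 - 1 / C2 p.1 p.2| else 0) with hK_def
  have key : ∀ n, effRes G a (fun x y => 1 / C1 x y) n - K ≤
      effRes G a (fun x y => 1 / C2 x y) n := by
    intro n
    have := effRes_cmp hpos1 hpos2 hsum a n
    rw [hK_def]
    linarith
  have h2 : Tendsto (fun n => effRes G a (fun x y => 1 / C1 x y) n - K) atTop atTop :=
    tendsto_atTop_add_const_right atTop (-K) h1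
  exact tendsto_atTop_mono key h2

/-- if two weight configurations `C_1, C_2` on a simple, undirected,
locally finite, connected graph satisfy `∑_{e∈E} |1/C_1(e) - 1/C_2(e)| < ∞`, then
the weighted random walk on `(G, C_1)` is recurrent iff the one on `(G, C_2)` is. -/
theorem stmt1 [Countable V] (G : SimpleGraph V) [DecidableRel G.Adj]
    (hconn : G.Connected) (hlf : G.LocallyFinite) (a : V) (C1 C2 : V → V → ℝ)
    (hsym1 : ∀ x y, C1 x y = C1 y x) (hsym2 : ∀ x y, C2 x y = C2 y x)
    (hpos1 : ∀ x y, G.Adj x y → 0 < C1 x y)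
    (hpos2 : ∀ x y, G.Adj x y → 0 < C2 x y)
    (hsum : Summable fun p : V × V =>
      if G.Adj p.1 p.2 then |1 / C1 p.1 p.2 - 1 / C2 p.1 p.2| else 0) :
    RecurrentNetwork G a C1 ↔ RecurrentNetwork G a C2 := by
  have hsum' : Summable fun p : V × V =>
      if G.Adj p.1 p.2 then |1 / C2 p.1 p.2 - 1 / C1 p.1 p.2| else 0 := by
    apply hsum.congr
    intro p
    simp [abs_sub_comm]
  exact ⟨rec_mono G a C1 C2 hpos1 hpos2 hsum, rec_mono G a C2 C1 hpos2 hpos1 hsum'⟩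


end
end

section
/- Let {⟨X_t, G_t⟩}_{t≥0} be a proper, elliptic RWCE on a connected locally finite graph G. If some vertex x is visited infinitely often almost surely, then every vertex is visited infinitely often almost surely (the walk is recurrent); if some vertex is visited finitely often almost surely, then every vertex is visited finitely often almost surely (the walk is transient). -/
open MeasureTheory

noncomputable section

/-- Transition probability `P(x, y; C)` of the weighted random walk with weights `C`. -/
def step {V : Type*} (G : SimpleGraph V) (C : V → V → ℝ) (x y : V) : ℝ :=
  open scoped Classical in
  if G.Adj x y then C x y / ∑' z, (if G.Adj x z then C x z else 0) else 0

private lemma sum_tendsto_aux {g : ℕ → ℝ} {c : ℝ} (hc : 0 < c) (hg : ∀ k, 0 ≤ g k)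
    {T : Set ℕ} (hT : T.Infinite) (hge : ∀ t ∈ T, c ≤ g t) :
    Filter.Tendsto (fun n => ∑ k ∈ Finset.range n, g k) Filter.atTop Filter.atTop := by
  classical
  refine Filter.tendsto_atTop_atTop.2 fun b => ?_
  obtain ⟨N, hN⟩ := exists_nat_ge (b / c)
  obtain ⟨u, huT, hucard⟩ := hT.exists_subset_card_eq N
  refine ⟨(u.sup id) + 1, fun m hm => ?_⟩
  have hsub : u ⊆ Finset.range m := fun k hk =>
    Finset.mem_range.2 (lt_of_le_of_lt (Finset.le_sup (f := id) hk)
      (lt_of_lt_of_le (Nat.lt_succ_self _) hm))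
  calc b ≤ (N : ℝ) * c := (div_le_iff₀ hc).1 hN
    _ = ∑ _k ∈ u, c := by rw [Finset.sum_const, hucard, nsmul_eq_mul]
    _ ≤ ∑ k ∈ u, g k := Finset.sum_le_sum fun k hk => hge k (huT hk)
    _ ≤ ∑ k ∈ Finset.range m, g k :=
      Finset.sum_le_sum_of_subset_of_nonneg hsub fun k _ _ => hg k

/-- a proper, elliptic RWCE on a connected locally finite graph is
recurrent as soon as some vertex is a.s. visited infinitely often, and transient
as soon as some vertex is a.s. visited finitely often. -/
theorem stmt5 {V Ω : Type*} [DecidableEq V] [MeasurableSpace V] [MeasurableSingletonClass V]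
    [Countable V] {mΩ : MeasurableSpace Ω}
    (μ : Measure Ω) [IsProbabilityMeasure μ]
    (G : SimpleGraph V) (hconn : G.Connected) (hlf : G.LocallyFinite)
    (X : ℕ → Ω → V) (Cw : ℕ → Ω → V → V → ℝ)
    (hXmeas : ∀ t, Measurable (X t)) (hCmeas : ∀ t, Measurable (Cw t))
    (ℱ : Filtration ℕ mΩ)
    (hℱ : ∀ t, ℱ t =
      ⨆ s ∈ Set.Iic t, MeasurableSpace.comap (fun ω => (X s ω, Cw s ω)) inferInstance)
    -- dynamics of the RWCE
    (hdyn : ∀ t y, μ[(fun ω => if X (t + 1) ω = y then (1 : ℝ) else 0) | ℱ t]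
        =ᵐ[μ] fun ω => step G (Cw t ω) (X t ω) y)
    -- proper
    (hproper : ∀ᵐ ω ∂μ, ∀ t x y, G.Adj x y → 0 < Cw t ω x y)
    -- elliptic
    (helliptic : ∀ x y, G.Adj x y → ∃ P : Ω → ℝ,
      Measurable[⨆ t, MeasurableSpace.comap (Cw t) inferInstance] P ∧
      (∀ᵐ ω ∂μ, 0 < P ω) ∧
      ∀ t, ∀ᵐ ω ∂μ, X t ω = x → P ω ≤ step G (Cw t ω) x y) :
    ((∃ x : V, ∀ᵐ ω ∂μ, {t | X t ω = x}.Infinite) →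
        ∀ x : V, ∀ᵐ ω ∂μ, {t | X t ω = x}.Infinite) ∧
    ((∃ x : V, ∀ᵐ ω ∂μ, {t | X t ω = x}.Finite) →
        ∀ x : V, ∀ᵐ ω ∂μ, {t | X t ω = x}.Finite) := by
  classical
  -- nonnegativity of the transition probabilities, a.s.
  have hstep_nonneg : ∀ᵐ ω ∂μ, ∀ t (v y : V), 0 ≤ step G (Cw t ω) v y := by
    filter_upwards [hproper] with ω hω t v y
    unfold step
    split_ifs with h
    · refine div_nonneg (hω t v y h).le (tsum_nonneg fun z => ?_)
      split_ifs with hz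
      · exact (hω t v z hz).le
      · exact le_rfl
    · exact le_rfl
  -- core lemma: for adjacent x, y, a.e. if x is visited i.o. then so is y
  have hkey : ∀ x y : V, G.Adj x y →
      ∀ᵐ ω ∂μ, {t | X t ω = x}.Infinite → {t | X t ω = y}.Infinite := by
    intro x y hxy
    obtain ⟨P, hPmeas, hPpos, hPle⟩ := helliptic x y hxy
    set s : ℕ → Set Ω := fun n => {ω | X n ω = y} with hs_def
    have hs : ∀ n, MeasurableSet[ℱ n] (s n) := by
      intro n
      have hle : MeasurableSpace.comap (fun ω => (X n ω, Cw n ω))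
          inferInstance ≤ ℱ n := by
        rw [hℱ n]
        exact le_iSup₂ (f := fun s (_ : s ∈ Set.Iic n) =>
          MeasurableSpace.comap (fun ω => (X s ω, Cw s ω)) inferInstance) n
          (Set.mem_Iic.2 le_rfl)
      refine hle _ ⟨Prod.fst ⁻¹' {y}, (measurableSet_singleton y).preimage measurable_fst, ?_⟩
      ext ω; simp [s]
    have hind : ∀ k, (s k).indicator (1 : Ω → ℝ) =
        fun ω => if X k ω = y then (1 : ℝ) else 0 := by
      intro k; funext ω
      by_cases h : X k ω = y <;> simp [s, Set.indicator_apply, h]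
    have hcond : ∀ k, (μ[(s (k + 1)).indicator (1 : Ω → ℝ) | ℱ k])
        =ᵐ[μ] fun ω => step G (Cw k ω) (X k ω) y := by
      intro k; rw [hind (k + 1)]; exact hdyn k y
    have hlimsup := MeasureTheory.ae_mem_limsup_atTop_iff (ℱ := ℱ) μ hs
    filter_upwards [hlimsup, ae_all_iff.2 hcond, hstep_nonneg, hPpos,
      ae_all_iff.2 hPle] with ω hω hcondω hnonneg hPposω hPleω hx
    have htend : Filter.Tendsto (fun n => ∑ k ∈ Finset.range n,
        (μ[(s (k + 1)).indicator (1 : Ω → ℝ) | ℱ k]) ω) Filter.atTop Filter.atTop := by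
      have hg : ∀ k, 0 ≤ (μ[(s (k + 1)).indicator (1 : Ω → ℝ) | ℱ k]) ω := by
        intro k; rw [hcondω k]; exact hnonneg k _ y
      refine sum_tendsto_aux hPposω hg hx fun t ht => ?_
      rw [hcondω t]
      have hXt : X t ω = x := ht
      rw [hXt]
      exact hPleω t hXt
    have hmem : ω ∈ Filter.limsup s Filter.atTop := hω.2 htend
    rw [Filter.mem_limsup_iff_frequently_mem] at hmem
    exact Nat.frequently_atTop_iff_infinite.1 hmem
  -- combine over all adjacent pairs and extend to reachability
  have hall : ∀ᵐ ω ∂μ, ∀ x y : V, G.Adj x y →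
      ({t | X t ω = x}.Infinite → {t | X t ω = y}.Infinite) := by
    rw [ae_all_iff]
    intro x
    rw [ae_all_iff]
    intro y
    by_cases h : G.Adj x y
    · filter_upwards [hkey x y h] with ω hω _ using hω
    · filter_upwards with ω hxy using absurd hxy h
  have hreach : ∀ᵐ ω ∂μ, ∀ x y : V,
      {t | X t ω = x}.Infinite → {t | X t ω = y}.Infinite := by
    filter_upwards [hall] with ω hω x y
    obtain ⟨p⟩ := hconn.preconnected x y
    induction p with
    | nil => exact id
    | cons h q ih => exact fun hx => ih (hω _ _ h hx)
  constructor
  · rintro ⟨x0, hx0⟩ x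
    filter_upwards [hx0, hreach] with ω hω hr using hr x0 x hω
  · rintro ⟨x0, hx0⟩ x
    filter_upwards [hx0, hreach] with ω hω hr
    rw [← Set.not_infinite]
    intro hinf
    exact (Set.not_infinite.2 hω) (hr x x0 hinf)

end
end
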